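/- A G-graded commutative ring R is a Gelfand graded ring if and only if for any two distinct graded maximal ideals M ≠ M', there exist homogeneous elements x, y ∈ h(R) with xy = 0, x ∉ M' and y ∉ M. -/

import Mathlib

/-!
If the separation property fails for graded maximal ideals `M ≠ M'`, then no product `x * y` with
homogeneous `x ∉ M'`, `y ∉ M` vanishes. These products form a multiplicative set avoiding `0`, so
some prime ideal `Q` avoids it, and the homogeneous core of `Q` is a homogeneous prime lying in
both `M` and `M'`. Conversely, if a homogeneous prime `P` lies in `M ≠ M'`, separating elements
`x ∉ M`, `y ∉ M'` satisfy `x * y = 0 ∈ P`, so `x ∈ P ⊆ M` or `y ∈ P ⊆ M'`.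
-/

section GradedGelfand

variable {G : Type*} [AddGroup G] [DecidableEq G] {R : Type*} [CommRing R]
variable (𝒜 : G → AddSubgroup R) [GradedRing 𝒜]

/-- A homogeneous (graded) prime ideal: a proper graded ideal that is prime
with respect to homogeneous elements. -/
def IsGradedPrime (P : Ideal R) : Prop :=
  P.IsHomogeneous 𝒜 ∧ P ≠ ⊤ ∧
    ∀ a b : R, SetLike.IsHomogeneousElem 𝒜 a → SetLike.IsHomogeneousElem 𝒜 b →
      a * b ∈ P → a ∈ P ∨ b ∈ P

/-- A graded maximal ideal: a proper graded ideal maximal among proper graded ideals. -/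
def IsGradedMaximal (M : Ideal R) : Prop :=
  M.IsHomogeneous 𝒜 ∧ M ≠ ⊤ ∧
    ∀ J : Ideal R, J.IsHomogeneous 𝒜 → M ≤ J → J ≠ ⊤ → J = M

/-- The homogeneous prime spectrum of a graded ring. -/
def GSpec := { P : Ideal R // IsGradedPrime 𝒜 P }

/-- The Zariski topology on the homogeneous prime spectrum, generated by the basic
open sets `D_G(r)` for homogeneous `r`; the closed sets are exactly the `V_G(I)`
for graded ideals `I`. -/
instance : TopologicalSpace (GSpec 𝒜) :=
  TopologicalSpace.generateFrom
    { U | ∃ r : R, SetLike.IsHomogeneousElem 𝒜 r ∧ U = { P : GSpec 𝒜 | r ∉ P.1 } }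

/-- The set of graded maximal ideals inside the homogeneous prime spectrum. -/
def GMax : Set (GSpec 𝒜) := { P | IsGradedMaximal 𝒜 P.1 }

/-- A Gelfand graded ring: every homogeneous prime ideal is contained in a unique
graded maximal ideal. -/
def IsGelfandGraded : Prop :=
  ∀ P : Ideal R, IsGradedPrime 𝒜 P →
    ∃! M : Ideal R, IsGradedMaximal 𝒜 M ∧ P ≤ M

/-- A pm⁺ graded ring: for every homogeneous prime `P`, the homogeneous primes
containing `P` form a chain. -/
def IsPMPlusGraded : Prop :=
  ∀ P Q Q' : Ideal R, IsGradedPrime 𝒜 P → IsGradedPrime 𝒜 Q → IsGradedPrime 𝒜 Q' →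
    P ≤ Q → P ≤ Q' → Q ≤ Q' ∨ Q' ≤ Q

end GradedGelfand

theorem Ideal.IsHomogeneous.le_of_forall_isHomogeneousElem {ι σ A : Type*} [Semiring A]
    [SetLike σ A] [AddSubmonoidClass σ A] [DecidableEq ι] [AddMonoid ι] {𝒜 : ι → σ}
    [GradedRing 𝒜] {I J : Ideal A} (hI : I.IsHomogeneous 𝒜)
    (h : ∀ x, SetLike.IsHomogeneousElem 𝒜 x → x ∈ I → x ∈ J) : I ≤ J := by
  rw [← hI.toIdeal_homogeneousCore_eq_self]
  exact Ideal.span_le.2 <| by rintro _ ⟨⟨x, hx⟩, hxI, rfl⟩; exact h x hx hxI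

section GradedPrimeAndMaximal

variable {G : Type*} [AddGroup G] [DecidableEq G] {R : Type*} [CommRing R]
variable {𝒜 : G → AddSubgroup R} [GradedRing 𝒜]

theorem Ideal.IsPrime.isGradedPrime_homogeneousCore {Q : Ideal R} (hQ : Q.IsPrime) :
    IsGradedPrime 𝒜 (Q.homogeneousCore 𝒜).toIdeal := by
  refine ⟨(Q.homogeneousCore 𝒜).isHomogeneous, fun htop => hQ.ne_top ?_,
    fun a b ha hb hab => ?_⟩
  · exact top_le_iff.1 (htop ▸ Q.toIdeal_homogeneousCore_le 𝒜)
  · exact (hQ.mem_or_mem (Q.toIdeal_homogeneousCore_le 𝒜 hab)).imp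
      (Ideal.mem_homogeneousCore_of_homogeneous_of_mem ha)
      (Ideal.mem_homogeneousCore_of_homogeneous_of_mem hb)

variable (𝒜) in
theorem exists_isGradedPrime_disjoint {S : Submonoid R} (h0 : (0 : R) ∉ S) :
    ∃ P : Ideal R, IsGradedPrime 𝒜 P ∧ Disjoint (P : Set R) S := by
  have hbot : Disjoint ((⊥ : Ideal R) : Set R) S :=
    Set.disjoint_left.2 fun x hx hxS => h0 ((Ideal.mem_bot.1 hx) ▸ hxS)
  obtain ⟨Q, hQ, -, hQS⟩ := Ideal.exists_le_prime_disjoint ⊥ S hbot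
  exact ⟨_, hQ.isGradedPrime_homogeneousCore,
    hQS.mono_left (Q.toIdeal_homogeneousCore_le 𝒜)⟩

def IsGradedPrime.homogeneousCompl {P : Ideal R} (hP : IsGradedPrime 𝒜 P) : Submonoid R where
  carrier := {x | SetLike.IsHomogeneousElem 𝒜 x ∧ x ∉ P}
  mul_mem' := fun ⟨ha, haP⟩ ⟨hb, hbP⟩ =>
    ⟨ha.mul hb, fun hab => (hP.2.2 _ _ ha hb hab).elim haP hbP⟩
  one_mem' := ⟨SetLike.isHomogeneousElem_one 𝒜, fun h1 => hP.2.1 ((Ideal.eq_top_iff_one P).2 h1)⟩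

theorem IsGradedPrime.le_of_disjoint_homogeneousCompl {P Q : Ideal R} (hP : IsGradedPrime 𝒜 P)
    (hQ : Q.IsHomogeneous 𝒜) (h : Disjoint (Q : Set R) hP.homogeneousCompl) : Q ≤ P :=
  hQ.le_of_forall_isHomogeneousElem fun x hx hxQ => by
    by_contra hxP
    exact Set.disjoint_left.1 h hxQ ⟨hx, hxP⟩

theorem IsGradedMaximal.exists_mul_add_eq_one {M : Ideal R} (hM : IsGradedMaximal 𝒜 M) {a : R}
    (ha : SetLike.IsHomogeneousElem 𝒜 a) (haM : a ∉ M) : ∃ r, ∃ m ∈ M, r * a + m = 1 := by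
  have hhom : (Ideal.span {a} ⊔ M).IsHomogeneous 𝒜 :=
    (Ideal.homogeneous_span 𝒜 {a} (by rintro x rfl; exact ha)).sup hM.1
  have htop : Ideal.span {a} ⊔ M = ⊤ := by
    by_contra hne
    exact haM (hM.2.2 _ hhom le_sup_right hne ▸ Ideal.mem_sup_left (Ideal.mem_span_singleton_self a))
  exact Ideal.mem_span_singleton_sup.1 (htop ▸ Submodule.mem_top)

theorem IsGradedMaximal.isGradedPrime {M : Ideal R} (hM : IsGradedMaximal 𝒜 M) :
    IsGradedPrime 𝒜 M := by
  refine ⟨hM.1, hM.2.1, fun a b ha _ hab => or_iff_not_imp_left.2 fun haM => ?_⟩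
  obtain ⟨r, m, hm, hrm⟩ := hM.exists_mul_add_eq_one ha haM
  have hb : b = r * (a * b) + b * m := by linear_combination (-b) * hrm
  exact hb ▸ M.add_mem (M.mul_mem_left r hab) (M.mul_mem_left b hm)

variable (𝒜) in
theorem exists_isGradedMaximal_le {I : Ideal R} (hI : I.IsHomogeneous 𝒜) (hI' : I ≠ ⊤) :
    ∃ M, IsGradedMaximal 𝒜 M ∧ I ≤ M := by
  have ⟨M, hIM, hM⟩ := zorn_le_nonempty₀ {J : Ideal R | J.IsHomogeneous 𝒜 ∧ J ≠ ⊤}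
    (fun c hc hchain J hJ => ?_) I ⟨hI, hI'⟩
  · exact ⟨M, ⟨hM.prop.1, hM.prop.2, fun J hJ hMJ hJ' => hM.eq_of_ge ⟨hJ, hJ'⟩ hMJ⟩, hIM⟩
  refine ⟨sSup c, ⟨.sSup fun K hK => (hc hK).1, fun htop => ?_⟩, fun _ => le_sSup⟩
  obtain ⟨K, hKc, hK1⟩ := (Submodule.mem_sSup_of_directed ⟨J, hJ⟩ hchain.directedOn).1
    ((Ideal.eq_top_iff_one _).1 htop)
  exact (hc hKc).2 ((Ideal.eq_top_iff_one K).2 hK1)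

end GradedPrimeAndMaximal

section Statements

variable {G : Type*} [AddGroup G] [DecidableEq G] {R : Type*} [CommRing R]
variable (𝒜 : G → AddSubgroup R) [GradedRing 𝒜]

theorem stmt_6 : IsGelfandGraded 𝒜 ↔
    ∀ M M' : Ideal R, IsGradedMaximal 𝒜 M → IsGradedMaximal 𝒜 M' → M ≠ M' →
      ∃ x y : R, SetLike.IsHomogeneousElem 𝒜 x ∧ SetLike.IsHomogeneousElem 𝒜 y ∧
        x * y = 0 ∧ x ∉ M' ∧ y ∉ M := by
  constructor
  · intro hGel M M' hM hM' hne
    by_contra! h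
    set T := hM.isGradedPrime.homogeneousCompl
    set T' := hM'.isGradedPrime.homogeneousCompl
    have h0 : (0 : R) ∉ T' ⊔ T := by
      rw [Submonoid.mem_sup]
      rintro ⟨x, ⟨hx, hxM'⟩, y, ⟨hy, hyM⟩, hxy⟩
      exact hyM (h x y hx hy hxy hxM')
    obtain ⟨P, hP, hPS⟩ := exists_isGradedPrime_disjoint 𝒜 h0
    have hPM : P ≤ M := hM.isGradedPrime.le_of_disjoint_homogeneousCompl hP.1
      (hPS.mono_right (SetLike.coe_subset_coe.2 le_sup_right))
    have hPM' : P ≤ M' := hM'.isGradedPrime.le_of_disjoint_homogeneousCompl hP.1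
      (hPS.mono_right (SetLike.coe_subset_coe.2 le_sup_left))
    exact hne ((hGel P hP).unique ⟨hM, hPM⟩ ⟨hM', hPM'⟩)
  · intro hsep P hP
    obtain ⟨M, hM, hPM⟩ := exists_isGradedMaximal_le 𝒜 hP.1 hP.2.1
    refine ⟨M, ⟨hM, hPM⟩, fun M' ⟨hM', hPM'⟩ => ?_⟩
    by_contra hne
    obtain ⟨x, y, hx, hy, hxy, hxM, hyM'⟩ := hsep M' M hM' hM hne
    rcases hP.2.2 x y hx hy (hxy ▸ P.zero_mem) with hxP | hyP
    exacts [hxM (hPM hxP), hyM' (hPM' hyP)]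
end Statements
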